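/- arXiv:2402.12793 — 3 statements merged into one kernel-verified Lean document; each statement's English description precedes it below -/
import Mathlib

section
/- For n ≥ 4 let M(n) be the n×n integer matrix with entries M_{i,i+1} = 1 and M_{i+1,i} = −1 for 1 ≤ i ≤ n−2, M_{n−2,n} = 1, M_{n,n−2} = −1, M_{n−1,n} = 2, M_{n,n−1} = −2, and all other entries 0. Then det M(n) = 4 if n is even, and det M(n) = 0 if n is odd. -/
/-!
The matrix is skew-symmetric, so its determinant vanishes in odd size. In even size, its first
row and first column are `e₁` and `-e₁`, so expanding along both removes the first two indices
and leaves the same matrix two sizes smaller; this descends to size `4`, where the determinant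
is `4`.
-/

open Matrix

/-- The matrix `M(n)` of the statement, with the indices `1, …, n` shifted to `0, …, n - 1`. -/
def typeDMatrix (n : ℕ) : Matrix (Fin n) (Fin n) ℤ := fun i j =>
  if (i : ℕ) + 1 = (j : ℕ) then (if (j : ℕ) = n - 1 then 2 else 1)
  else if (j : ℕ) + 1 = (i : ℕ) then (if (i : ℕ) = n - 1 then -2 else -1)
  else if (i : ℕ) + 2 = (j : ℕ) ∧ (j : ℕ) = n - 1 then 1
  else if (j : ℕ) + 2 = (i : ℕ) ∧ (i : ℕ) = n - 1 then -1
  else 0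

theorem det_eq_zero_of_transpose_eq_neg {ι R : Type*} [Fintype ι] [DecidableEq ι] [CommRing R]
    [IsAddTorsionFree R] {A : Matrix ι ι R} (hA : Aᵀ = -A) (hodd : Odd (Fintype.card ι)) :
    A.det = 0 :=
  self_eq_neg.mp <| calc
    A.det = Aᵀ.det := (det_transpose A).symm
    _ = -A.det := by rw [hA, det_neg, hodd.neg_one_pow, neg_one_mul]

theorem det_eq_of_row_zero_col_zero_single_one {R : Type*} [CommRing R] {m : ℕ}
    (A : Matrix (Fin (m + 2)) (Fin (m + 2)) R)
    (hrow : ∀ j, j ≠ 1 → A 0 j = 0) (hcol : ∀ i, i ≠ 1 → A i 0 = 0) :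
    A.det =
      -(A 0 1 * A 1 0) * (A.submatrix (Fin.succ ∘ Fin.succ) (Fin.succ ∘ Fin.succ)).det := by
  rw [det_succ_row_zero, Finset.sum_eq_single (1 : Fin (m + 2))
    (fun j _ hj => by rw [hrow j hj, mul_zero, zero_mul]) (by simp)]
  have hcol0 : Fin.succAbove (1 : Fin (m + 2)) 0 = 0 := Fin.succAbove_ne_zero_zero one_ne_zero
  rw [det_succ_column_zero, Finset.sum_eq_single (0 : Fin (m + 1))
    (fun i _ hi => by
      rw [submatrix_apply, hcol0, hcol _ (by rwa [← Fin.succ_zero_eq_one, Ne, Fin.succ_inj]),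
        mul_zero, zero_mul])
    (by simp)]
  have hcols : Fin.succAbove (1 : Fin (m + 2)) ∘ Fin.succ = Fin.succ ∘ Fin.succ := by
    funext j
    exact Fin.succAbove_of_le_castSucc _ _ (by simp [Fin.le_def])
  have hrows : Fin.succ ∘ Fin.succAbove (0 : Fin (m + 1)) = Fin.succ ∘ Fin.succ := by
    simp only [Fin.succAbove_zero]
  rw [submatrix_submatrix, hcols, hrows, submatrix_apply, hcol0, Fin.succ_zero_eq_one,
    Fin.val_one, Fin.val_zero]
  ring

theorem typeDMatrix_transpose (n : ℕ) : (typeDMatrix n)ᵀ = -typeDMatrix n := by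
  ext i j
  simp only [transpose_apply, neg_apply, typeDMatrix]
  split_ifs <;> omega

theorem typeDMatrix_submatrix_succ_succ (m : ℕ) :
    (typeDMatrix (m + 2)).submatrix (Fin.succ ∘ Fin.succ) (Fin.succ ∘ Fin.succ) =
      typeDMatrix m := by
  ext i j
  simp only [submatrix_apply, Function.comp_apply, typeDMatrix, Fin.val_succ]
  split_ifs <;> omega

theorem typeDMatrix_zero_apply {m : ℕ} (hm : 2 ≤ m) (j : Fin (m + 2)) :
    typeDMatrix (m + 2) 0 j = if j = 1 then 1 else 0 := by
  simp only [typeDMatrix, Fin.val_zero, Fin.ext_iff, Fin.val_one]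
  split_ifs <;> first | contradiction | omega

theorem typeDMatrix_apply_zero {m : ℕ} (hm : 2 ≤ m) (i : Fin (m + 2)) :
    typeDMatrix (m + 2) i 0 = if i = 1 then -1 else 0 := by
  simp only [typeDMatrix, Fin.val_zero, Fin.ext_iff, Fin.val_one]
  split_ifs <;> first | contradiction | omega

theorem det_typeDMatrix_add_two {m : ℕ} (hm : 2 ≤ m) :
    (typeDMatrix (m + 2)).det = (typeDMatrix m).det := by
  rw [det_eq_of_row_zero_col_zero_single_one _
      (fun j hj => by rw [typeDMatrix_zero_apply hm, if_neg hj])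
      (fun i hi => by rw [typeDMatrix_apply_zero hm, if_neg hi]),
    typeDMatrix_submatrix_succ_succ, typeDMatrix_zero_apply hm, typeDMatrix_apply_zero hm]
  simp

theorem det_typeDMatrix_four : (typeDMatrix 4).det = 4 := by
  simp [det_succ_row_zero, Fin.sum_univ_succ, typeDMatrix, Fin.succAbove]

theorem det_typeDMatrix_of_even {n : ℕ} (hn : 4 ≤ n) (he : Even n) :
    (typeDMatrix n).det = 4 := by
  obtain ⟨k, rfl⟩ := he
  induction k, (by omega : 2 ≤ k) using Nat.le_induction with
  | base => exact det_typeDMatrix_four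
  | succ k hk ih =>
    rw [show k + 1 + (k + 1) = k + k + 2 by ring, det_typeDMatrix_add_two (by omega), ih (by omega)]

theorem det_typeDMatrix_of_odd {n : ℕ} (ho : Odd n) : (typeDMatrix n).det = 0 :=
  det_eq_zero_of_transpose_eq_neg (typeDMatrix_transpose n) (by rwa [Fintype.card_fin])

/-- Type `D_n` case of Proposition 2.7: the determinant of the matrix `R + S`
is `4` for even `n` and `0` for odd `n`. -/
theorem stmt4 (n : ℕ) (hn : 4 ≤ n) (M : Matrix (Fin n) (Fin n) ℤ)
    (hM : ∀ i j : Fin n, M i j =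
      if (i : ℕ) + 1 = (j : ℕ) then (if (j : ℕ) = n - 1 then 2 else 1)
      else if (j : ℕ) + 1 = (i : ℕ) then (if (i : ℕ) = n - 1 then -2 else -1)
      else if (i : ℕ) + 2 = (j : ℕ) ∧ (j : ℕ) = n - 1 then 1
      else if (j : ℕ) + 2 = (i : ℕ) ∧ (i : ℕ) = n - 1 then -1
      else 0) :
    M.det = if Even n then 4 else 0 := by
  obtain rfl : M = typeDMatrix n := Matrix.ext hM
  split_ifs with he
  · exact det_typeDMatrix_of_even hn he
  · exact det_typeDMatrix_of_odd (Nat.not_even_iff_odd.mp he)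
end

section
/- Let K = ℚ(r,s) be the field of rational functions in two variables r, s over ℚ. Let n ≥ 1, let R be an n×n integer matrix with R + Rᵀ invertible over ℚ, and set S := −Rᵀ. Suppose η, φ ∈ ℤⁿ satisfy, for every vector λ ∈ ℤⁿ with all entries nonnegative, the equality r^{λᵀ(Rᵀφ + Sᵀη)} · s^{λᵀ(Sᵀφ + Rᵀη)} = 1 in K. Then η = φ. -/
/-!
Testing the hypothesis on the standard basis vectors `λ = eᵢ`, the multiplicative
independence of `r` and `s` in `ℚ(r,s)` forces both exponent vectors `Rᵀφ + Sᵀη` and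
`Sᵀφ + Rᵀη` to vanish.
With `S = -Rᵀ` their difference is `(R + Rᵀ)(φ - η)`, and `R + Rᵀ` is injective on `ℤⁿ`
because it is invertible over `ℚ`.
-/

open Matrix

/-- `K = ℚ(r,s)`, the field of rational functions in two variables over `ℚ`. -/
noncomputable abbrev K : Type := FractionRing (MvPolynomial (Fin 2) ℚ)

/-- The element `r` of `K = ℚ(r,s)`. -/
noncomputable def rr : K := algebraMap (MvPolynomial (Fin 2) ℚ) K (MvPolynomial.X 0)

/-- The element `s` of `K = ℚ(r,s)`. -/
noncomputable def ss : K := algebraMap (MvPolynomial (Fin 2) ℚ) K (MvPolynomial.X 1)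

theorem MvPolynomial.eq_and_eq_of_X_pow_mul_X_pow_eq {σ R : Type*} [CommSemiring R]
    [Nontrivial R] {i j : σ} (hij : i ≠ j) {m n m' n' : ℕ}
    (h : (X i ^ m * X j ^ n : MvPolynomial σ R) = X i ^ m' * X j ^ n') : m = m' ∧ n = n' := by
  simp only [X_pow_eq_monomial, monomial_mul, mul_one] at h
  have hexp := monomial_left_injective one_ne_zero h
  constructor
  · simpa [hij] using DFunLike.congr_fun hexp i
  · simpa [hij.symm] using DFunLike.congr_fun hexp j

theorem MvPolynomial.zpow_X_mul_zpow_X_eq_one_iff {σ R L : Type*} [CommRing R] [IsDomain R]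
    [Field L] [Algebra (MvPolynomial σ R) L] [IsFractionRing (MvPolynomial σ R) L]
    {i j : σ} (hij : i ≠ j) (a b : ℤ) :
    algebraMap (MvPolynomial σ R) L (X i) ^ a * algebraMap (MvPolynomial σ R) L (X j) ^ b = 1 ↔
      a = 0 ∧ b = 0 := by
  set ι := algebraMap (MvPolynomial σ R) L
  have hι : Function.Injective ι := IsFractionRing.injective _ _
  have hx : ι (X i) ≠ 0 := (map_ne_zero_iff ι hι).2 (X_ne_zero i)
  have hy : ι (X j) ≠ 0 := (map_ne_zero_iff ι hι).2 (X_ne_zero j)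
  refine ⟨fun h => ?_, fun ⟨ha, hb⟩ => by simp [ha, hb]⟩
  rw [← a.toNat_sub_toNat_neg, ← b.toNat_sub_toNat_neg, zpow_sub₀ hx, zpow_sub₀ hy,
    div_mul_div_comm, div_eq_one_iff_eq (mul_ne_zero (by positivity) (by positivity))] at h
  simp only [zpow_natCast, ← map_pow, ← map_mul] at h
  obtain ⟨ha, hb⟩ := eq_and_eq_of_X_pow_mul_X_pow_eq hij (hι h)
  omega

theorem Matrix.mulVec_injective_of_isUnit_map {n R S : Type*} [Fintype n] [DecidableEq n]
    [CommRing R] [CommRing S] {f : R →+* S} (hf : Function.Injective f) {M : Matrix n n R}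
    (hM : IsUnit (M.map f)) : Function.Injective M.mulVec := by
  intro v w hvw
  refine hf.comp_left (mulVec_injective_of_isUnit hM ?_)
  ext i
  rw [← RingHom.map_mulVec, ← RingHom.map_mulVec, hvw]

theorem Matrix.eq_zero_of_forall_nonneg_dotProduct_eq_zero {n α : Type*} [Fintype n]
    [DecidableEq n] [NonAssocSemiring α] [Preorder α] [ZeroLEOneClass α] {v : n → α}
    (h : ∀ lam : n → α, (∀ i, 0 ≤ lam i) → lam ⬝ᵥ v = 0) :
    v = 0 := by
  ext i
  simpa using h (Pi.single i 1) fun j => by rw [Pi.single_apply]; split <;> norm_num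

theorem stmt11_general (n : ℕ)
    (R S : Matrix (Fin n) (Fin n) ℤ) (hS : S = -Rᵀ)
    (hinv : IsUnit ((R + Rᵀ).map ((↑) : ℤ → ℚ)))
    (η φ : Fin n → ℤ)
    (h : ∀ lam : Fin n → ℤ, (∀ i, 0 ≤ lam i) →
      rr ^ (dotProduct lam (Rᵀ.mulVec φ + Sᵀ.mulVec η)) *
        ss ^ (dotProduct lam (Sᵀ.mulVec φ + Rᵀ.mulVec η)) = 1) :
    η = φ := by
  have hexp := fun lam hlam =>
    (MvPolynomial.zpow_X_mul_zpow_X_eq_one_iff (L := K) (by decide : (0 : Fin 2) ≠ 1) _ _).1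
      (h lam hlam)
  have hr : Rᵀ *ᵥ φ - R *ᵥ η = 0 :=
    eq_zero_of_forall_nonneg_dotProduct_eq_zero fun lam hlam => by
      simpa [hS, neg_mulVec, sub_eq_add_neg] using (hexp lam hlam).1
  have hs : Rᵀ *ᵥ η - R *ᵥ φ = 0 :=
    eq_zero_of_forall_nonneg_dotProduct_eq_zero fun lam hlam => by
      simpa [hS, neg_mulVec, sub_eq_add_neg, add_comm] using (hexp lam hlam).2
  have hker : (R + Rᵀ) *ᵥ (φ - η) = (R + Rᵀ) *ᵥ 0 := by
    rw [mulVec_zero, add_mulVec, mulVec_sub, mulVec_sub, ← sub_eq_zero.1 hr, ← sub_eq_zero.1 hs]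
    abel
  rw [eq_comm, ← sub_eq_zero]
  exact mulVec_injective_of_isUnit_map (Int.castRingHom ℚ).injective_int hinv hker

/-- Lemma 3.2(i) of the paper in root-lattice coordinates: if `R + Rᵀ` is
invertible over `ℚ` and
`r^{λᵀ(Rᵀφ + Sᵀη)} s^{λᵀ(Sᵀφ + Rᵀη)} = 1` for all `λ ∈ ℤⁿ` with nonnegative
entries, then `η = φ`. -/
theorem stmt11 (n : ℕ) (hn : 1 ≤ n)
    (R S : Matrix (Fin n) (Fin n) ℤ) (hS : S = -Rᵀ)
    (hinv : IsUnit ((R + Rᵀ).map ((↑) : ℤ → ℚ)))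
    (η φ : Fin n → ℤ)
    (h : ∀ lam : Fin n → ℤ, (∀ i, 0 ≤ lam i) →
      rr ^ (dotProduct lam (Rᵀ.mulVec φ + Sᵀ.mulVec η)) *
        ss ^ (dotProduct lam (Sᵀ.mulVec φ + Rᵀ.mulVec η)) = 1) :
    η = φ :=
  stmt11_general n R S hS hinv η φ h
end

section
/- Let k be a field, H a Hopf algebra over k with comultiplication Δ, counit ε and antipode S, and let M be a finite-dimensional k-vector space equipped with a k-algebra homomorphism ζ: H → End_k(M). Let Θ ∈ End_k(M) satisfy Θ ∘ ζ(u) = ζ(S²(u)) ∘ Θ for all u ∈ H. Suppose Γ ∈ H ⊗_k End_k(M) satisfies Γ · ((id ⊗ ζ)(Δ(x))) = ((id ⊗ ζ)(Δ(x))) · Γ for all x ∈ H, where H ⊗_k End_k(M) carries the tensor-product algebra structure. Then the element c := (id ⊗ tr)(Γ · (1 ⊗ Θ)) ∈ H, obtained by applying the partial trace id ⊗ tr : H ⊗_k End_k(M) → H to Γ·(1 ⊗ Θ), lies in the centre of H: c·x = x·c for all x ∈ H. -/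
set_option maxHeartbeats 1000000
set_option synthInstance.maxHeartbeats 400000

open scoped TensorProduct

namespace Stmt14Aux

open TensorProduct LinearMap Coalgebra HopfAlgebra

variable {k H : Type*} [Field k] [Ring H] [HopfAlgebra k H]

local notation "𝒮" => (HopfAlgebra.antipode (R := k) (A := H))
local notation "Δ" => (Coalgebra.comul (R := k) (A := H))
local notation "εH" => (Coalgebra.counit (R := k) (A := H))
local notation "μH" => (LinearMap.mul' k H)
local notation "ttc" => (TensorProduct.tensorTensorTensorComm k H H H H)

lemma antipode_one' : 𝒮 (1 : H) = 1 := by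
  have h := HopfAlgebra.mul_antipode_rTensor_comul_apply (R := k) (a := (1 : H))
  simpa [Algebra.TensorProduct.one_def] using h

/-- Comultiplication of the tensor-square "coalgebra", defined by hand
(the mathlib instance is universe-restricted). -/
noncomputable def ΔC : (H ⊗[k] H) →ₗ[k] (H ⊗[k] H) ⊗[k] (H ⊗[k] H) :=
  (TensorProduct.tensorTensorTensorComm k H H H H).toLinearMap ∘ₗ TensorProduct.map Δ Δ

lemma ΔC_tmul (x y : H) :
    ΔC (x ⊗ₜ[k] y) = ttc (Δ x ⊗ₜ[k] Δ y) := by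
  simp [ΔC]

/-- the convolution unit -/
noncomputable def uC : (H ⊗[k] H) →ₗ[k] H :=
  Algebra.linearMap k H ∘ₗ (εH) ∘ₗ μH

/-- convolution product on `Hom(H ⊗ H, H)` -/
noncomputable def conv (f g : (H ⊗[k] H) →ₗ[k] H) : (H ⊗[k] H) →ₗ[k] H :=
  μH ∘ₗ TensorProduct.map f g ∘ₗ ΔC

noncomputable def Ff : (H ⊗[k] H) →ₗ[k] H := 𝒮 ∘ₗ μH

noncomputable def Gg : (H ⊗[k] H) →ₗ[k] H :=
  μH ∘ₗ TensorProduct.map 𝒮 𝒮 ∘ₗ (TensorProduct.comm k H H).toLinearMap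

lemma Ff_tmul (a b : H) : Ff (a ⊗ₜ[k] b) = 𝒮 (a * b) := by simp [Ff]

lemma Gg_tmul (a b : H) : Gg (a ⊗ₜ[k] b) = 𝒮 b * 𝒮 a := by simp [Gg]

lemma map_mul'_ttc (u v : H ⊗[k] H) :
    TensorProduct.map μH μH (ttc (u ⊗ₜ[k] v)) = u * v := by
  induction u using TensorProduct.induction_on with
  | zero => simp
  | tmul a b =>
    induction v using TensorProduct.induction_on with
    | zero => simp
    | tmul c d => simp [Algebra.TensorProduct.tmul_mul_tmul]
    | add v1 v2 h1 h2 => simp [tmul_add, mul_add, h1, h2]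
  | add u1 u2 h1 h2 => simp [add_tmul, add_mul, h1, h2]

lemma K1 : TensorProduct.map μH μH ∘ₗ (ΔC (k := k) (H := H)) = Δ ∘ₗ μH := by
  apply TensorProduct.ext'
  intro x y
  simp [ΔC_tmul, map_mul'_ttc]

lemma conv_Ff_mul : conv (Ff (k := k) (H := H)) μH = uC := by
  apply LinearMap.ext
  intro w
  have hmap : TensorProduct.map (Ff (k := k) (H := H)) μH
      = LinearMap.rTensor H 𝒮 ∘ₗ TensorProduct.map μH μH := by
    rw [Ff]
    rw [show (LinearMap.rTensor H 𝒮 : H ⊗[k] H →ₗ[k] H ⊗[k] H) = TensorProduct.map 𝒮 LinearMap.id from rfl]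
    rw [← TensorProduct.map_comp, LinearMap.id_comp]
  have h1 : TensorProduct.map μH μH (ΔC w) = Δ (μH w) := LinearMap.congr_fun (K1 (k := k) (H := H)) w
  calc conv Ff μH w = μH (TensorProduct.map Ff μH (ΔC w)) := rfl
    _ = μH (LinearMap.rTensor H 𝒮 (TensorProduct.map μH μH (ΔC w))) := by rw [hmap]; rfl
    _ = μH (LinearMap.rTensor H 𝒮 (Δ (μH w))) := by rw [h1]
    _ = algebraMap k H (εH (μH w)) := HopfAlgebra.mul_antipode_rTensor_comul_apply _
    _ = uC w := rfl

/-- `B (a ⊗ b) h = a * (h * 𝒮 b)` -/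
noncomputable def Bmap : (H ⊗[k] H) →ₗ[k] H →ₗ[k] H :=
  TensorProduct.lift (LinearMap.mk₂ k
    (fun a b => LinearMap.mulLeft k a ∘ₗ LinearMap.mulRight k (𝒮 b))
    (fun a a' b => by ext h; simp [add_mul])
    (fun c a b => by ext h; simp [smul_mul_assoc])
    (fun a b b' => by ext h; simp [mul_add])
    (fun c a b => by ext h; simp [mul_smul_comm]))

lemma Bmap_tmul (a b h : H) : Bmap (a ⊗ₜ[k] b) h = a * (h * 𝒮 b) := rfl

lemma Hlp2 (u v : H ⊗[k] H) :
    μH (TensorProduct.map μH (Gg (k := k) (H := H)) (ttc (u ⊗ₜ[k] v)))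
      = Bmap u (μH (LinearMap.lTensor H 𝒮 v)) := by
  induction u using TensorProduct.induction_on with
  | zero => simp
  | tmul a b =>
    induction v using TensorProduct.induction_on with
    | zero => simp
    | tmul c d => simp [Gg_tmul, Bmap_tmul, mul_assoc]
    | add v1 v2 h1 h2 => simp [tmul_add, h1, h2]
  | add u1 u2 h1 h2 => simp [add_tmul, h1, h2]

lemma Hlp3 (u : H ⊗[k] H) : Bmap u (1 : H) = μH (LinearMap.lTensor H 𝒮 u) := by
  induction u using TensorProduct.induction_on with
  | zero => simp
  | tmul a b => simp [Bmap_tmul]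
  | add u1 u2 h1 h2 => simp [h1, h2]

lemma conv_mul_Gg : conv μH (Gg (k := k) (H := H)) = uC := by
  apply TensorProduct.ext'
  intro x y
  have : conv μH (Gg (k := k) (H := H)) (x ⊗ₜ y)
      = μH (TensorProduct.map μH Gg (ttc (Δ x ⊗ₜ[k] Δ y))) := by
    simp [conv, ΔC_tmul]
  rw [this, Hlp2]
  rw [HopfAlgebra.mul_antipode_lTensor_comul_apply]
  rw [Algebra.algebraMap_eq_smul_one, map_smul, Hlp3,
    HopfAlgebra.mul_antipode_lTensor_comul_apply]
  simp only [uC, LinearMap.comp_apply, LinearMap.mul'_apply, Bialgebra.counit_mul,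
    Algebra.algebraMap_eq_smul_one, LinearMap.smul_apply, smul_smul, Algebra.linearMap_apply]
  rw [mul_comm]

lemma Hlp4 (g : (H ⊗[k] H) →ₗ[k] H) (u v : H ⊗[k] H) :
    μH (TensorProduct.map (uC (k := k) (H := H)) g (ttc (u ⊗ₜ[k] v)))
      = g ((TensorProduct.lid k H ((εH).rTensor H u)) ⊗ₜ[k]
          (TensorProduct.lid k H ((εH).rTensor H v))) := by
  induction u using TensorProduct.induction_on with
  | zero => simp
  | tmul a b =>
    induction v using TensorProduct.induction_on with
    | zero => simp
    | tmul c d =>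
      simp only [tensorTensorTensorComm_tmul, map_tmul, mul'_apply, rTensor_tmul, lid_tmul]
      rw [show uC ((a : H) ⊗ₜ[k] c) = algebraMap k H (εH a * εH c) from by simp [uC]]
      rw [← Algebra.smul_def, ← smul_tmul', tmul_smul, map_smul, map_smul, smul_smul, mul_comm]
    | add v1 v2 h1 h2 => simp [tmul_add, h1, h2]
  | add u1 u2 h1 h2 => simp [add_tmul, h1, h2]

lemma Hlp5 (f : (H ⊗[k] H) →ₗ[k] H) (u v : H ⊗[k] H) :
    μH (TensorProduct.map f (uC (k := k) (H := H)) (ttc (u ⊗ₜ[k] v)))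
      = f ((TensorProduct.rid k H ((εH).lTensor H u)) ⊗ₜ[k]
          (TensorProduct.rid k H ((εH).lTensor H v))) := by
  induction u using TensorProduct.induction_on with
  | zero => simp
  | tmul a b =>
    induction v using TensorProduct.induction_on with
    | zero => simp
    | tmul c d =>
      simp only [tensorTensorTensorComm_tmul, map_tmul, mul'_apply, lTensor_tmul, rid_tmul]
      rw [show uC ((b : H) ⊗ₜ[k] d) = algebraMap k H (εH b * εH d) from by simp [uC]]
      rw [← Algebra.commutes, ← Algebra.smul_def, ← smul_tmul', tmul_smul, map_smul, map_smul, smul_smul]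
    | add v1 v2 h1 h2 => simp [tmul_add, h1, h2]
  | add u1 u2 h1 h2 => simp [add_tmul, h1, h2]

lemma conv_uC_left (g : (H ⊗[k] H) →ₗ[k] H) : conv uC g = g := by
  apply TensorProduct.ext'
  intro x y
  have : conv (uC (k := k) (H := H)) g (x ⊗ₜ y)
      = μH (TensorProduct.map uC g (ttc (Δ x ⊗ₜ[k] Δ y))) := by
    simp [conv, ΔC_tmul]
  rw [this, Hlp4]
  simp

lemma conv_uC_right (f : (H ⊗[k] H) →ₗ[k] H) : conv f uC = f := by
  apply TensorProduct.ext'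
  intro x y
  have : conv f (uC (k := k) (H := H)) (x ⊗ₜ y)
      = μH (TensorProduct.map f uC (ttc (Δ x ⊗ₜ[k] Δ y))) := by
    simp [conv, ΔC_tmul]
  rw [this, Hlp5]
  simp

noncomputable def σmap :
    (((H ⊗[k] H) ⊗[k] H) ⊗[k] ((H ⊗[k] H) ⊗[k] H)) →ₗ[k]
      ((H ⊗[k] H) ⊗[k] (H ⊗[k] H)) ⊗[k] (H ⊗[k] H) :=
  (LinearMap.rTensor (H ⊗[k] H)
      (TensorProduct.tensorTensorTensorComm k H H H H).toLinearMap) ∘ₗ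
    (TensorProduct.tensorTensorTensorComm k (H ⊗[k] H) H (H ⊗[k] H) H).toLinearMap

noncomputable def σ'map :
    ((H ⊗[k] (H ⊗[k] H)) ⊗[k] (H ⊗[k] (H ⊗[k] H))) →ₗ[k]
      (H ⊗[k] H) ⊗[k] ((H ⊗[k] H) ⊗[k] (H ⊗[k] H)) :=
  (LinearMap.lTensor (H ⊗[k] H)
      (TensorProduct.tensorTensorTensorComm k H H H H).toLinearMap) ∘ₗ
    (TensorProduct.tensorTensorTensorComm k H (H ⊗[k] H) H (H ⊗[k] H)).toLinearMap

lemma C1 (u v : H ⊗[k] H) :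
    (ΔC (k := k) (H := H)).rTensor (H ⊗[k] H) (ttc (u ⊗ₜ[k] v))
      = σmap ((LinearMap.rTensor H Δ u) ⊗ₜ[k] (LinearMap.rTensor H Δ v)) := by
  induction u using TensorProduct.induction_on with
  | zero => simp
  | tmul a b =>
    induction v using TensorProduct.induction_on with
    | zero => simp
    | tmul c d => simp [σmap, ΔC_tmul]
    | add v1 v2 h1 h2 => simp [tmul_add, h1, h2]
  | add u1 u2 h1 h2 => simp [add_tmul, h1, h2]

lemma C2 (u v : H ⊗[k] H) :
    (ΔC (k := k) (H := H)).lTensor (H ⊗[k] H) (ttc (u ⊗ₜ[k] v))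
      = σ'map ((LinearMap.lTensor H Δ u) ⊗ₜ[k] (LinearMap.lTensor H Δ v)) := by
  induction u using TensorProduct.induction_on with
  | zero => simp
  | tmul a b =>
    induction v using TensorProduct.induction_on with
    | zero => simp
    | tmul c d => simp [σ'map, ΔC_tmul]
    | add v1 v2 h1 h2 => simp [tmul_add, h1, h2]
  | add u1 u2 h1 h2 => simp [add_tmul, h1, h2]

lemma C3 (Ps Qs : (H ⊗[k] H) ⊗[k] H) :
    (TensorProduct.assoc k (H ⊗[k] H) (H ⊗[k] H) (H ⊗[k] H)) (σmap (Ps ⊗ₜ[k] Qs))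
      = σ'map ((TensorProduct.assoc k H H H Ps) ⊗ₜ[k] (TensorProduct.assoc k H H H Qs)) := by
  induction Ps using TensorProduct.induction_on with
  | zero => simp
  | tmul p e =>
    induction Qs using TensorProduct.induction_on with
    | zero => simp
    | tmul q f =>
      induction p using TensorProduct.induction_on with
      | zero => simp
      | tmul a b =>
        induction q using TensorProduct.induction_on with
        | zero => simp
        | tmul c d => simp [σmap, σ'map]
        | add q1 q2 h1 h2 => simp only [add_tmul, tmul_add, map_add, h1, h2]
      | add p1 p2 h1 h2 => simp only [add_tmul, tmul_add, map_add, h1, h2]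
    | add q1 q2 h1 h2 => simp only [tmul_add, map_add, h1, h2]
  | add p1 p2 h1 h2 => simp only [add_tmul, map_add, h1, h2]

lemma CO (w : H ⊗[k] H) :
    (TensorProduct.assoc k (H ⊗[k] H) (H ⊗[k] H) (H ⊗[k] H))
        ((ΔC (k := k) (H := H)).rTensor (H ⊗[k] H) (ΔC w))
      = (ΔC (k := k) (H := H)).lTensor (H ⊗[k] H) (ΔC w) := by
  induction w using TensorProduct.induction_on with
  | zero => simp
  | tmul x y =>
    rw [ΔC_tmul, C1, C3, Coalgebra.coassoc_apply, Coalgebra.coassoc_apply, ← C2]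
  | add w1 w2 h1 h2 => simp only [map_add, h1, h2]

lemma conv_assoc (f g h : (H ⊗[k] H) →ₗ[k] H) :
    conv (conv f g) h = conv f (conv g h) := by
  have d1 : TensorProduct.map (conv f g) h
      = TensorProduct.map (μH ∘ₗ TensorProduct.map f g) h ∘ₗ
          (ΔC (k := k) (H := H)).rTensor (H ⊗[k] H) := by
    rw [show ((ΔC (k := k) (H := H)).rTensor (H ⊗[k] H))
        = TensorProduct.map ΔC LinearMap.id from rfl]
    rw [← TensorProduct.map_comp, LinearMap.comp_id]
    rfl
  have d2 : TensorProduct.map f (conv g h)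
      = TensorProduct.map f (μH ∘ₗ TensorProduct.map g h) ∘ₗ
          (ΔC (k := k) (H := H)).lTensor (H ⊗[k] H) := by
    rw [show ((ΔC (k := k) (H := H)).lTensor (H ⊗[k] H))
        = TensorProduct.map LinearMap.id ΔC from rfl]
    rw [← TensorProduct.map_comp, LinearMap.comp_id]
    rfl
  have Ψ : μH ∘ₗ TensorProduct.map (μH ∘ₗ TensorProduct.map f g) h
      = (μH ∘ₗ TensorProduct.map f (μH ∘ₗ TensorProduct.map g h)) ∘ₗ
          (TensorProduct.assoc k (H ⊗[k] H) (H ⊗[k] H) (H ⊗[k] H)).toLinearMap := by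
    apply TensorProduct.ext_threefold
    intro p q r
    simp [mul_assoc]
  apply LinearMap.ext
  intro w
  calc conv (conv f g) h w
      = μH (TensorProduct.map (conv f g) h (ΔC w)) := rfl
    _ = μH (TensorProduct.map (μH ∘ₗ TensorProduct.map f g) h
          ((ΔC (k := k) (H := H)).rTensor (H ⊗[k] H) (ΔC w))) := by rw [d1]; rfl
    _ = μH (TensorProduct.map f (μH ∘ₗ TensorProduct.map g h)
          ((TensorProduct.assoc k (H ⊗[k] H) (H ⊗[k] H) (H ⊗[k] H))
            ((ΔC (k := k) (H := H)).rTensor (H ⊗[k] H) (ΔC w)))) := by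
        have := LinearMap.congr_fun Ψ ((ΔC (k := k) (H := H)).rTensor (H ⊗[k] H) (ΔC w))
        simpa using this
    _ = μH (TensorProduct.map f (μH ∘ₗ TensorProduct.map g h)
          ((ΔC (k := k) (H := H)).lTensor (H ⊗[k] H) (ΔC w))) := by rw [CO]
    _ = conv f (conv g h) w := by rw [conv, LinearMap.comp_apply, LinearMap.comp_apply, d2]; rfl

lemma antipode_mul' (a b : H) : 𝒮 (a * b) = 𝒮 b * 𝒮 a := by
  have hFG : (Ff (k := k) (H := H)) = Gg := by
    calc Ff = conv Ff uC := (conv_uC_right Ff).symm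
      _ = conv Ff (conv μH Gg) := by rw [conv_mul_Gg]
      _ = conv (conv Ff μH) Gg := (conv_assoc Ff μH Gg).symm
      _ = conv uC Gg := by rw [conv_Ff_mul]
      _ = Gg := conv_uC_left Gg
  have := LinearMap.congr_fun hFG (a ⊗ₜ[k] b)
  simpa [Ff_tmul, Gg_tmul] using this

/-! ### The quantum partial trace -/

variable {M : Type*} [AddCommGroup M] [Module k M]

/-- `qmap Θ A = (id ⊗ tr)(A · (1 ⊗ Θ))`. -/
noncomputable def qmap (Θ : Module.End k M) : (H ⊗[k] Module.End k M) →ₗ[k] H :=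
  (TensorProduct.rid k H).toLinearMap ∘ₗ
    TensorProduct.map LinearMap.id (LinearMap.trace k M) ∘ₗ
      LinearMap.mulRight k ((1 : H) ⊗ₜ[k] Θ)

lemma qmap_tmul (Θ : Module.End k M) (a : H) (f : Module.End k M) :
    qmap Θ (a ⊗ₜ[k] f) = (LinearMap.trace k M (f * Θ)) • a := by
  simp [qmap, Algebra.TensorProduct.tmul_mul_tmul]

lemma lq1 (Θ : Module.End k M) (A : H ⊗[k] Module.End k M) (y : H) :
    qmap Θ (A * (y ⊗ₜ[k] (1 : Module.End k M))) = qmap Θ A * y := by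
  induction A using TensorProduct.induction_on with
  | zero => simp
  | tmul a f => simp [Algebra.TensorProduct.tmul_mul_tmul, qmap_tmul, smul_mul_assoc]
  | add A1 A2 h1 h2 => simp [add_mul, h1, h2]

lemma lq2 (Θ : Module.End k M) (A : H ⊗[k] Module.End k M) (y : H) :
    qmap Θ ((y ⊗ₜ[k] (1 : Module.End k M)) * A) = y * qmap Θ A := by
  induction A using TensorProduct.induction_on with
  | zero => simp
  | tmul a f => simp [Algebra.TensorProduct.tmul_mul_tmul, qmap_tmul, mul_smul_comm]
  | add A1 A2 h1 h2 => simp [mul_add, h1, h2]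

lemma lq3 (ζ : H →ₐ[k] Module.End k M) (Θ : Module.End k M)
    (hΘ : ∀ u : H, Θ * ζ u = ζ (𝒮 (𝒮 u)) * Θ)
    (A : H ⊗[k] Module.End k M) (u v : H) :
    qmap Θ (((1 : H) ⊗ₜ[k] ζ u) * A * ((1 : H) ⊗ₜ[k] ζ v))
      = qmap Θ (A * ((1 : H) ⊗ₜ[k] ζ (v * 𝒮 (𝒮 u)))) := by
  induction A using TensorProduct.induction_on with
  | zero => simp
  | tmul a f =>
    simp only [Algebra.TensorProduct.tmul_mul_tmul, one_mul, mul_one, qmap_tmul]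
    congr 1
    calc LinearMap.trace k M (ζ u * f * ζ v * Θ)
        = LinearMap.trace k M (ζ u * (f * (ζ v * Θ))) := by simp only [mul_assoc]
      _ = LinearMap.trace k M ((f * (ζ v * Θ)) * ζ u) :=
            LinearMap.trace_mul_comm k (ζ u) (f * (ζ v * Θ))
      _ = LinearMap.trace k M (f * (ζ v * (Θ * ζ u))) := by simp only [mul_assoc]
      _ = LinearMap.trace k M (f * (ζ v * (ζ (𝒮 (𝒮 u)) * Θ))) := by rw [hΘ u]
      _ = LinearMap.trace k M (f * ζ (v * 𝒮 (𝒮 u)) * Θ) := by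
            rw [show ζ (v * 𝒮 (𝒮 u)) = ζ v * ζ (𝒮 (𝒮 u)) from map_mul ζ _ _]
            simp only [mul_assoc]
  | add A1 A2 h1 h2 => simp [mul_add, add_mul, h1, h2]

theorem central (ζ : H →ₐ[k] Module.End k M) (Θ : Module.End k M)
    (hΘ : ∀ u : H, Θ * ζ u = ζ (𝒮 (𝒮 u)) * Θ)
    (Γ : H ⊗[k] Module.End k M)
    (hΓ : ∀ x : H,
      Γ * (Algebra.TensorProduct.map (AlgHom.id k H) ζ) (Δ x)
        = (Algebra.TensorProduct.map (AlgHom.id k H) ζ) (Δ x) * Γ)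
    (x : H) : qmap Θ Γ * x = x * qmap Θ Γ := by
  classical
  set Φ : (H ⊗[k] H) →ₐ[k] H ⊗[k] Module.End k M :=
    Algebra.TensorProduct.map (AlgHom.id k H) ζ with hΦ
  -- auxiliary linear maps
  set ι : H →ₗ[k] H ⊗[k] Module.End k M :=
    (TensorProduct.mk k H (Module.End k M) 1) ∘ₗ ζ.toLinearMap ∘ₗ 𝒮 with hι
  have hι_apply : ∀ z : H, ι z = (1 : H) ⊗ₜ[k] ζ (𝒮 z) := fun z => rfl
  set ψ₁ : ((H ⊗[k] H) ⊗[k] H) →ₗ[k] H :=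
    qmap Θ ∘ₗ LinearMap.mul' k (H ⊗[k] Module.End k M) ∘ₗ
      TensorProduct.map (LinearMap.mulLeft k Γ ∘ₗ Φ.toLinearMap) ι with hψ₁
  set ψ₂ : ((H ⊗[k] H) ⊗[k] H) →ₗ[k] H :=
    qmap Θ ∘ₗ LinearMap.mul' k (H ⊗[k] Module.End k M) ∘ₗ
      TensorProduct.map (LinearMap.mulRight k Γ ∘ₗ Φ.toLinearMap) ι with hψ₂
  have hψ₁_apply : ∀ (U : H ⊗[k] H) (z : H),
      ψ₁ (U ⊗ₜ[k] z) = qmap Θ ((Γ * Φ U) * ι z) := fun U z => rfl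
  have hψ₂_apply : ∀ (U : H ⊗[k] H) (z : H),
      ψ₂ (U ⊗ₜ[k] z) = qmap Θ ((Φ U * Γ) * ι z) := fun U z => rfl
  set Pm : (H ⊗[k] (H ⊗[k] H)) →ₗ[k] H :=
    qmap Θ ∘ₗ LinearMap.mulLeft k Γ ∘ₗ Φ.toLinearMap ∘ₗ
      LinearMap.lTensor H (LinearMap.mul' k H ∘ₗ LinearMap.lTensor H 𝒮) with hPm
  set gm : (H ⊗[k] H) →ₗ[k] H :=
    qmap Θ ∘ₗ LinearMap.mulLeft k Γ ∘ₗ ι ∘ₗ LinearMap.mul' k H ∘ₗ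
      LinearMap.rTensor H 𝒮 with hgm
  set ρm : (H ⊗[k] (H ⊗[k] H)) →ₗ[k] H :=
    LinearMap.mul' k H ∘ₗ TensorProduct.map LinearMap.id gm with hρm
  -- step 1–3 : `qmap Θ Γ * x = Pm (lTensor comul (comul x))`
  have e3 : (x ⊗ₜ[k] (1 : H) : H ⊗[k] H)
      = (LinearMap.lTensor H (LinearMap.mul' k H ∘ₗ LinearMap.lTensor H 𝒮))
          ((LinearMap.lTensor H Δ) (Δ x)) := by
    rw [← LinearMap.comp_apply, ← LinearMap.lTensor_comp]
    have hfield : (LinearMap.mul' k H ∘ₗ LinearMap.lTensor H 𝒮) ∘ₗ Δ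
        = Algebra.linearMap k H ∘ₗ εH := by
      rw [LinearMap.comp_assoc]
      exact HopfAlgebra.mul_antipode_lTensor_comul (R := k)
    rw [hfield, LinearMap.lTensor_comp, LinearMap.comp_apply,
      Coalgebra.lTensor_counit_comul]
    simp
  have step3 : qmap Θ Γ * x = Pm ((LinearMap.lTensor H Δ) (Δ x)) := by
    rw [← lq1 Θ Γ x]
    have e2 : (x ⊗ₜ[k] (1 : Module.End k M)) = Φ (x ⊗ₜ[k] (1 : H)) := by
      simp [hΦ]
    rw [e2, e3]
    simp [hPm]
  -- step 4 : move to `ψ₁ (rTensor comul (comul x))`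
  have hmap1 : Pm ∘ₗ (TensorProduct.assoc k H H H).toLinearMap = ψ₁ := by
    apply TensorProduct.ext_threefold
    intro a b c
    show qmap Θ (Γ * Φ (a ⊗ₜ[k] (b * 𝒮 c))) = qmap Θ ((Γ * Φ (a ⊗ₜ[k] b)) * ι c)
    rw [hι_apply]
    have : (Φ (a ⊗ₜ[k] b)) * ((1 : H) ⊗ₜ[k] ζ (𝒮 c)) = Φ (a ⊗ₜ[k] (b * 𝒮 c)) := by
      simp [hΦ, Algebra.TensorProduct.tmul_mul_tmul]
    rw [mul_assoc, this]
  have step4 : Pm ((LinearMap.lTensor H Δ) (Δ x))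
      = ψ₁ ((LinearMap.rTensor H Δ) (Δ x)) := by
    rw [← Coalgebra.coassoc_apply, ← LinearMap.congr_fun hmap1
      ((LinearMap.rTensor H Δ) (Δ x))]
    rfl
  -- step 5 : use the commutation hypothesis `hΓ`
  have step5 : ψ₁ ((LinearMap.rTensor H Δ) (Δ x))
      = ψ₂ ((LinearMap.rTensor H Δ) (Δ x)) := by
    have key : ∀ w : H ⊗[k] H,
        ψ₁ ((LinearMap.rTensor H Δ) w) = ψ₂ ((LinearMap.rTensor H Δ) w) := by
      intro w
      induction w using TensorProduct.induction_on with
      | zero => simp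
      | tmul y z =>
        rw [LinearMap.rTensor_tmul, hψ₁_apply, hψ₂_apply, hΓ y]
      | add w1 w2 h1 h2 => simp only [map_add, h1, h2]
    exact key _
  -- step 6 : trace cyclicity + `hΘ` + antimultiplicativity of the antipode
  have hmap2 : ψ₂ = ρm ∘ₗ (TensorProduct.assoc k H H H).toLinearMap := by
    apply TensorProduct.ext_threefold
    intro a b c
    show qmap Θ ((Φ (a ⊗ₜ[k] b) * Γ) * ι c) = ρm ((TensorProduct.assoc k H H H) ((a ⊗ₜ[k] b) ⊗ₜ[k] c))
    have hρ : ρm ((TensorProduct.assoc k H H H) ((a ⊗ₜ[k] b) ⊗ₜ[k] c)) = a * gm (b ⊗ₜ[k] c) := by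
      rw [TensorProduct.assoc_tmul]
      show LinearMap.mul' k H (TensorProduct.map LinearMap.id gm (a ⊗ₜ[k] (b ⊗ₜ[k] c))) = _
      rw [TensorProduct.map_tmul, LinearMap.mul'_apply, LinearMap.id_coe, id_eq]
    rw [hρ]
    have hgm_apply : gm (b ⊗ₜ[k] c) = qmap Θ (Γ * ι (𝒮 b * c)) := rfl
    rw [hgm_apply, hι_apply, hι_apply]
    have hsplit : Φ (a ⊗ₜ[k] b)
        = (a ⊗ₜ[k] (1 : Module.End k M)) * ((1 : H) ⊗ₜ[k] ζ b) := by
      simp [hΦ, Algebra.TensorProduct.tmul_mul_tmul]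
    rw [hsplit]
    rw [show ((a ⊗ₜ[k] (1 : Module.End k M)) * ((1 : H) ⊗ₜ[k] ζ b) * Γ) *
          ((1 : H) ⊗ₜ[k] ζ (𝒮 c))
      = (a ⊗ₜ[k] (1 : Module.End k M)) *
          (((1 : H) ⊗ₜ[k] ζ b) * Γ * ((1 : H) ⊗ₜ[k] ζ (𝒮 c))) from by
        rw [mul_assoc, mul_assoc, mul_assoc]]
    rw [lq2, lq3 ζ Θ hΘ Γ b (𝒮 c)]
    rw [show 𝒮 (𝒮 b * c) = 𝒮 c * 𝒮 (𝒮 b) from antipode_mul' (𝒮 b) c]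
  have step6 : ψ₂ ((LinearMap.rTensor H Δ) (Δ x))
      = ρm ((LinearMap.lTensor H Δ) (Δ x)) := by
    rw [hmap2, LinearMap.comp_apply]
    rw [show (TensorProduct.assoc k H H H).toLinearMap
        ((LinearMap.rTensor H Δ) (Δ x))
      = (LinearMap.lTensor H Δ) (Δ x) from Coalgebra.coassoc_apply x]
  -- step 7 : collapse using the antipode axiom and counit
  have step7 : ρm ((LinearMap.lTensor H Δ) (Δ x)) = x * qmap Θ Γ := by
    have hcol : ∀ w : H ⊗[k] H,
        ρm ((LinearMap.lTensor H Δ) w)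
          = (LinearMap.mulRight k (qmap Θ Γ) ∘ₗ (TensorProduct.rid k H).toLinearMap ∘ₗ
              LinearMap.lTensor H εH) w := by
      intro w
      induction w using TensorProduct.induction_on with
      | zero => simp
      | tmul y z =>
        have h1 : ρm ((LinearMap.lTensor H Δ) (y ⊗ₜ[k] z)) = y * gm (Δ z) := by
          rw [LinearMap.lTensor_tmul]
          show LinearMap.mul' k H (TensorProduct.map LinearMap.id gm (y ⊗ₜ[k] Δ z)) = _
          rw [TensorProduct.map_tmul, LinearMap.mul'_apply, LinearMap.id_coe, id_eq]
        have h2 : gm (Δ z) = εH z • qmap Θ Γ := by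
          have hg : gm (Δ z)
              = qmap Θ (Γ * ι (LinearMap.mul' k H ((LinearMap.rTensor H 𝒮) (Δ z)))) := rfl
          rw [hg, HopfAlgebra.mul_antipode_rTensor_comul_apply]
          rw [Algebra.algebraMap_eq_smul_one, map_smul, hι_apply]
          rw [show 𝒮 (1 : H) = 1 from antipode_one' (k := k)]
          rw [_root_.map_one]
          rw [show ((1 : H) ⊗ₜ[k] (1 : Module.End k M)) = (1 : H ⊗[k] Module.End k M) from
            (Algebra.TensorProduct.one_def).symm]
          rw [mul_smul_comm, mul_one, map_smul]
        rw [h1, h2]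
        simp [mul_smul_comm]
      | add w1 w2 h1 h2 => simp only [map_add, h1, h2]
    rw [hcol, LinearMap.comp_apply, LinearMap.comp_apply, Coalgebra.lTensor_counit_comul]
    simp
  rw [step3, step4, step5, step6, step7]

end Stmt14Aux

open Stmt14Aux

/-- Section 5.2 of the paper: let `ζ : H → End(M)` be a finite-dimensional
representation of a Hopf algebra `H`, let `Θ ∈ End(M)` satisfy
`Θ ∘ ζ(u) = ζ(S²(u)) ∘ Θ` for all `u`, and let `Γ ∈ H ⊗ End(M)` commute with
`(id ⊗ ζ)(Δ x)` for all `x ∈ H`. Then `c = (id ⊗ tr)(Γ · (1 ⊗ Θ))` is central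
in `H`. -/
theorem stmt14 (k : Type*) [Field k] (H : Type*) [Ring H] [HopfAlgebra k H]
    (M : Type*) [AddCommGroup M] [Module k M] [FiniteDimensional k M]
    (ζ : H →ₐ[k] Module.End k M) (Θ : Module.End k M)
    (hΘ : ∀ u : H,
      Θ * ζ u = ζ (HopfAlgebra.antipode (R := k) (HopfAlgebra.antipode (R := k) u)) * Θ)
    (Γ : H ⊗[k] Module.End k M)
    (hΓ : ∀ x : H,
      Γ * (Algebra.TensorProduct.map (AlgHom.id k H) ζ) (Coalgebra.comul (R := k) x)
        = (Algebra.TensorProduct.map (AlgHom.id k H) ζ) (Coalgebra.comul (R := k) x) * Γ) :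
    ∀ x : H,
      ((TensorProduct.rid k H).toLinearMap.comp
          (TensorProduct.map LinearMap.id (LinearMap.trace k M)))
        (Γ * ((1 : H) ⊗ₜ[k] Θ)) * x
      = x * ((TensorProduct.rid k H).toLinearMap.comp
          (TensorProduct.map LinearMap.id (LinearMap.trace k M)))
        (Γ * ((1 : H) ⊗ₜ[k] Θ)) := by
  intro x
  have h := Stmt14Aux.central ζ Θ hΘ Γ hΓ x
  simpa [Stmt14Aux.qmap, LinearMap.mulRight_apply] using h
end
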